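/- arXiv:2310.05486 — 2 statements merged into one kernel-verified Lean document; each statement's English description precedes it below -/
import Mathlib

section
/- Let X be a real Hilbert space, A the generator of an exponentially stable C₀-semigroup {e^{tA}} on X (so 0 is in the resolvent set of A), Y a real Hilbert space, S ∈ L(Y) skew-adjoint, and C ∈ L(D(A), Y) an A-bounded operator. Then the operator M₀ ∈ L(X, Y) defined by M₀ x = C A⁻¹ x − ∫₀^∞ S e^{−tS} C A⁻¹ e^{tA} x dt (the integral converging absolutely for each x) satisfies the Sylvester equation M₀ A x = S M₀ x + C x for all x ∈ D(A). -/
open MeasureTheory NormedSpace RealInnerProductSpace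
set_option synthInstance.maxHeartbeats 1000000
set_option maxHeartbeats 2000000
set_option linter.unusedVariables false

theorem sylvester_solution_formula
    {X Y : Type*}
    [NormedAddCommGroup X] [InnerProductSpace ℝ X] [CompleteSpace X]
    [NormedAddCommGroup Y] [InnerProductSpace ℝ Y] [CompleteSpace Y]
    -- the generator A with domain D
    (D : Submodule ℝ X) (A : D →ₗ[ℝ] X)
    -- the semigroup generated by A
    (eA : ℝ → X →L[ℝ] X)
    (heA0 : eA 0 = ContinuousLinearMap.id ℝ X)
    (heAsg : ∀ s ≥ 0, ∀ t ≥ 0, eA (s + t) = (eA s).comp (eA t))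
    (hgen : ∀ (x : D) (t : ℝ), 0 ≤ t →
      HasDerivAt (fun s => eA s (x : X)) (eA t (A x)) t)
    -- exponential stability
    (Mc ω : ℝ) (hMc : 1 ≤ Mc) (hω : 0 < ω)
    (hstab : ∀ t ≥ 0, ‖eA t‖ ≤ Mc * Real.exp (-ω * t))
    -- the bounded inverse A⁻¹ of A (0 is in the resolvent set)
    (Ainv : X →L[ℝ] X) (hAinvD : ∀ x : X, Ainv x ∈ D)
    (hAAinv : ∀ x : X, A ⟨Ainv x, hAinvD x⟩ = x)
    (hAinvA : ∀ x : D, Ainv (A x) = (x : X))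
    -- S skew-adjoint and bounded on Y
    (S : Y →L[ℝ] Y) (hS : ContinuousLinearMap.adjoint S = -S)
    -- C is A-bounded: C A⁻¹ is a bounded operator from X to Y
    (C : D →ₗ[ℝ] Y) (CAinv : X →L[ℝ] Y)
    (hCA : ∀ x : X, CAinv x = C ⟨Ainv x, hAinvD x⟩)
    -- the candidate solution M₀
    (M₀ : X →L[ℝ] Y)
    (hM₀ : ∀ x : X, M₀ x = CAinv x -
      ∫ t in Set.Ioi (0 : ℝ), (NormedSpace.exp ((-t) • S)) (S (CAinv (eA t x)))) :
    (∀ x : X, Integrable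
        (fun t : ℝ => (NormedSpace.exp ((-t) • S)) (S (CAinv (eA t x))))
        (volume.restrict (Set.Ioi (0 : ℝ)))) ∧
    (∀ x : D, M₀ (A x) = S (M₀ (x : X)) + C x) := by
  letI : NormedAlgebra ℚ (Y →L[ℝ] Y) := NormedAlgebra.restrictScalars ℚ ℝ (Y →L[ℝ] Y)
  -- exp of skew-adjoint is an isometry
  have hstar : ∀ r : ℝ, star (r • S) = (-r) • S := by
    intro r
    rw [star_smul, star_trivial, ContinuousLinearMap.star_eq_adjoint, hS, smul_neg, ← neg_smul]
  have hunit : ∀ r : ℝ, exp ((-r) • S) * exp (r • S) = 1 := by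
    intro r
    rw [← exp_add_of_commute (((Commute.refl S).smul_left (-r)).smul_right r)]
    rw [neg_smul, neg_add_cancel, exp_zero]
  have hiso : ∀ (r : ℝ) (v : Y), ‖exp (r • S) v‖ = ‖v‖ := by
    intro r v
    have h1 : ContinuousLinearMap.adjoint (exp (r • S)) = exp ((-r) • S) := by
      rw [← ContinuousLinearMap.star_eq_adjoint, star_exp, hstar r]
    have h2 : ⟪exp (r • S) v, exp (r • S) v⟫ = ⟪v, v⟫ := by
      rw [← ContinuousLinearMap.adjoint_inner_left, h1, ← ContinuousLinearMap.mul_apply, hunit,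
        ContinuousLinearMap.one_apply]
    have h3 : ‖exp (r • S) v‖ ^ 2 = ‖v‖ ^ 2 := by
      rw [← real_inner_self_eq_norm_sq, ← real_inner_self_eq_norm_sq, h2]
    nlinarith [norm_nonneg (exp (r • S) v), norm_nonneg v]
  -- pointwise bound
  have hbound : ∀ (z : X) (t : ℝ), 0 ≤ t →
      ‖S (CAinv (eA t z))‖ ≤ ‖S‖ * ‖CAinv‖ * (Mc * ‖z‖) * Real.exp (-ω * t) := by
    intro z t ht
    calc ‖S (CAinv (eA t z))‖ ≤ ‖S‖ * ‖CAinv (eA t z)‖ := S.le_opNorm _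
      _ ≤ ‖S‖ * (‖CAinv‖ * ‖eA t z‖) := by gcongr; exact CAinv.le_opNorm _
      _ ≤ ‖S‖ * (‖CAinv‖ * (Mc * Real.exp (-ω * t) * ‖z‖)) := by
          gcongr
          calc ‖eA t z‖ ≤ ‖eA t‖ * ‖z‖ := (eA t).le_opNorm z
            _ ≤ Mc * Real.exp (-ω * t) * ‖z‖ := by gcongr; exact hstab t ht
      _ = ‖S‖ * ‖CAinv‖ * (Mc * ‖z‖) * Real.exp (-ω * t) := by ring
  -- measurability of t ↦ eA t x on Ioi 0
  have hmeasA : ∀ x : X, AEStronglyMeasurable (fun t => eA t x)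
      (volume.restrict (Set.Ioi (0 : ℝ))) := by
    intro x
    have hx : A ⟨Ainv x, hAinvD x⟩ = x := hAAinv x
    have hder : ∀ t ∈ Set.Ioi (0 : ℝ), deriv (fun s => eA s (Ainv x)) t = eA t x := by
      intro t ht
      have h := (hgen ⟨Ainv x, hAinvD x⟩ t (le_of_lt ht)).deriv
      rw [hx] at h
      exact h
    refine (aestronglyMeasurable_deriv (fun s => eA s (Ainv x)) _).congr ?_
    filter_upwards [ae_restrict_mem measurableSet_Ioi] with t ht using hder t ht
  -- measurability of the integrand
  have hmeasF : ∀ x : X, AEStronglyMeasurable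
      (fun t : ℝ => (exp ((-t) • S)) (S (CAinv (eA t x))))
      (volume.restrict (Set.Ioi (0 : ℝ))) := by
    intro x
    have h1 : Continuous fun t : ℝ => exp ((-t) • S) :=
      exp_continuous.comp (continuous_neg.smul continuous_const)
    have h2 : AEStronglyMeasurable (fun t : ℝ => S (CAinv (eA t x)))
        (volume.restrict (Set.Ioi (0 : ℝ))) :=
      (S.continuous.comp CAinv.continuous).comp_aestronglyMeasurable (hmeasA x)
    exact isBoundedBilinearMap_apply.continuous.comp_aestronglyMeasurable
      (h1.aestronglyMeasurable.prodMk h2)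
  -- integrability
  have hint : ∀ x : X, Integrable
      (fun t : ℝ => (exp ((-t) • S)) (S (CAinv (eA t x))))
      (volume.restrict (Set.Ioi (0 : ℝ))) := by
    intro x
    refine Integrable.mono'
      (g := fun t => ‖S‖ * ‖CAinv‖ * (Mc * ‖x‖) * Real.exp (-ω * t))
      ((exp_neg_integrableOn_Ioi 0 hω).const_mul _) (hmeasF x) ?_
    filter_upwards [ae_restrict_mem measurableSet_Ioi] with t ht
    rw [hiso]
    exact hbound x t (le_of_lt ht)
  refine ⟨hint, ?_⟩
  intro x
  set f : ℝ → Y := fun t => (exp ((-t) • S)) (S (CAinv (eA t (x : X)))) with hfdef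
  set f' : ℝ → Y := fun t =>
    (exp ((-t) • S)) (S (CAinv (eA t (A x)))) - S (f t) with hf'def
  have hSexp : ∀ t : ℝ, Commute (exp ((-t) • S)) S :=
    fun t => ((Commute.refl S).smul_left (-t)).exp_left
  have hderiv : ∀ t : ℝ, 0 ≤ t → HasDerivAt f (f' t) t := by
    intro t ht
    have h1 : HasDerivAt (fun u : ℝ => exp (u • S)) (exp ((-t) • S) * S) (-t) :=
      hasDerivAt_exp_smul_const S (-t)
    have h2 : HasDerivAt (fun s : ℝ => -s) (-1 : ℝ) t := (hasDerivAt_id t).neg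
    have hB : HasDerivAt (fun s : ℝ => exp ((-s) • S))
        ((-1 : ℝ) • (exp ((-t) • S) * S)) t := h1.scomp t h2
    have hu : HasDerivAt (fun s : ℝ => (S.comp CAinv) (eA s (x : X)))
        ((S.comp CAinv) (eA t (A x))) t :=
      (S.comp CAinv).hasFDerivAt.comp_hasDerivAt t (hgen x t ht)
    have h3 := hB.clm_apply hu
    have hcomm : ∀ v : Y, S ((exp ((-t) • S)) v) = (exp ((-t) • S)) (S v) := by
      intro v
      rw [← ContinuousLinearMap.mul_apply, ← ContinuousLinearMap.mul_apply,
        (hSexp t).symm.eq]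
    have h4 : (((-1 : ℝ) • (exp ((-t) • S) * S)) ((S.comp CAinv) (eA t (x : X))) +
        (exp ((-t) • S)) ((S.comp CAinv) (eA t (A x)))) = f' t := by
      simp only [hf'def, hfdef]
      rw [ContinuousLinearMap.smul_apply, ContinuousLinearMap.mul_apply,
        ContinuousLinearMap.comp_apply, ContinuousLinearMap.comp_apply,
        neg_one_smul, hcomm]
      abel
    rw [← h4]
    exact h3
  have hf'int : IntegrableOn f' (Set.Ioi (0 : ℝ)) volume :=
    (hint (A x)).sub (S.integrable_comp (hint (x : X)))
  have htend : Filter.Tendsto f Filter.atTop (nhds 0) := by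
    have hb : Filter.Tendsto
        (fun t : ℝ => ‖S‖ * ‖CAinv‖ * (Mc * ‖(x : X)‖) * Real.exp (-ω * t))
        Filter.atTop (nhds 0) := by
      have : Filter.Tendsto (fun t : ℝ => Real.exp (-ω * t)) Filter.atTop (nhds 0) := by
        have h5 : Filter.Tendsto (fun t : ℝ => -ω * t) Filter.atTop Filter.atBot := by
          apply Filter.Tendsto.const_mul_atTop_of_neg (neg_neg_iff_pos.mpr hω) Filter.tendsto_id
        exact Real.tendsto_exp_atBot.comp h5
      simpa using this.const_mul (‖S‖ * ‖CAinv‖ * (Mc * ‖(x : X)‖))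
    apply squeeze_zero_norm' _ hb
    filter_upwards [Filter.eventually_ge_atTop (0 : ℝ)] with t ht
    simp only [hfdef]
    rw [hiso]
    exact hbound _ t ht
  have hFTC : (∫ t in Set.Ioi (0 : ℝ), f' t) = 0 - f 0 :=
    MeasureTheory.integral_Ioi_of_hasDerivAt_of_tendsto
      ((hderiv 0 le_rfl).continuousAt.continuousWithinAt)
      (fun t ht => hderiv t (le_of_lt ht)) hf'int htend
  have hf0 : f 0 = S (CAinv (x : X)) := by
    simp [hfdef, heA0, exp_zero]
  have hsplit : (∫ t in Set.Ioi (0 : ℝ), f' t) =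
      (∫ t in Set.Ioi (0 : ℝ), (exp ((-t) • S)) (S (CAinv (eA t (A x))))) -
      S (∫ t in Set.Ioi (0 : ℝ), f t) := by
    rw [hf'def]
    rw [integral_sub (hint (A x)) (S.integrable_comp (hint (x : X)))]
    rw [ContinuousLinearMap.integral_comp_comm S (hint (x : X))]
  have key : (∫ t in Set.Ioi (0 : ℝ), (exp ((-t) • S)) (S (CAinv (eA t (A x))))) =
      S (∫ t in Set.Ioi (0 : ℝ), f t) - S (CAinv (x : X)) := by
    have := hFTC
    rw [hsplit, hf0] at this
    rw [sub_eq_iff_eq_add] at this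
    rw [this]
    abel
  have hCAx : CAinv (A x) = C x := by
    rw [hCA, show (⟨Ainv (A x), hAinvD _⟩ : D) = x from Subtype.ext (hAinvA x)]
  rw [hM₀, hM₀, key, hCAx, map_sub]
  abel
end

section
/- Let X be a real Hilbert space, A : D(A) → X a densely defined operator, P ∈ L(X) self-adjoint and coercive (⟨Px, x⟩ ≥ p‖x‖² with p > 0), and μ > 0 such that ⟨A x, P x⟩ ≤ -μ‖x‖² for all x ∈ D(A). If A generates a C₀-semigroup {e^{tA}}, then {e^{tA}} is exponentially stable: there exist M ≥ 1, ω > 0 with ‖e^{tA}‖ ≤ M e^{-ωt}. -/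
open RealInnerProductSpace Set

/-!
With `c = max ‖P‖ p`, the form `V x = ⟪P x, x⟫` satisfies `p ‖x‖² ≤ V x ≤ c ‖x‖²`. Along a
trajectory `u t = e^{tA} x` with `x ∈ D(A)` one has `V' = 2 ⟪A u, P u⟫ ≤ -2μ ‖u‖² ≤ -(2μ/c) V`,
so Grönwall gives `V (u t) ≤ e^{-2μt/c} V x`, hence `‖e^{tA} x‖ ≤ √(c/p) e^{-μt/c} ‖x‖`;
this bound extends from the dense domain to all of `X`.
-/

theorem ContinuousLinearMap.opNorm_le_of_dense {𝕜 E F : Type*} [NontriviallyNormedField 𝕜]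
    [SeminormedAddCommGroup E] [SeminormedAddCommGroup F] [NormedSpace 𝕜 E] [NormedSpace 𝕜 F]
    (f : E →L[𝕜] F) {s : Set E} (hs : Dense s) {K : ℝ} (hK : 0 ≤ K)
    (h : ∀ x ∈ s, ‖f x‖ ≤ K * ‖x‖) : ‖f‖ ≤ K :=
  f.opNorm_le_bound hK <| hs.induction h <|
    isClosed_le f.continuous.norm (continuous_const.mul continuous_norm)

section InnerProductSpace

variable {X : Type*} [NormedAddCommGroup X] [InnerProductSpace ℝ X]

theorem real_inner_apply_self_le_opNorm_mul_sq (P : X →L[ℝ] X) (v : X) :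
    ⟪P v, v⟫ ≤ ‖P‖ * ‖v‖ ^ 2 :=
  calc ⟪P v, v⟫ ≤ ‖P v‖ * ‖v‖ := real_inner_le_norm _ _
    _ ≤ ‖P‖ * ‖v‖ * ‖v‖ := by gcongr; exact P.le_opNorm v
    _ = ‖P‖ * ‖v‖ ^ 2 := by ring

theorem HasDerivWithinAt.real_inner_apply_self {P : X →L[ℝ] X}
    (hP : (P : X →ₗ[ℝ] X).IsSymmetric) {u : ℝ → X} {u' : X} {s : Set ℝ} {x : ℝ}
    (hu : HasDerivWithinAt u u' s x) :
    HasDerivWithinAt (fun r => ⟪P (u r), u r⟫) (2 * ⟪u', P (u x)⟫) s x := by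
  refine ((P.hasFDerivAt.comp_hasDerivWithinAt x hu).inner ℝ hu).congr_deriv ?_
  rw [Function.comp_apply, hP.apply_clm u' (u x), real_inner_comm u', two_mul]

theorem real_inner_apply_self_le_mul_exp {P : X →L[ℝ] X}
    (hP : (P : X →ₗ[ℝ] X).IsSymmetric) {u v : ℝ → X} {ω t : ℝ} (ht : 0 ≤ t)
    (hu : ContinuousOn u (Icc 0 t))
    (hderiv : ∀ s ∈ Ico 0 t, HasDerivWithinAt u (v s) (Ici s) s)
    (hdiss : ∀ s ∈ Ico 0 t, ⟪v s, P (u s)⟫ ≤ -ω * ⟪P (u s), u s⟫) :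
    ⟪P (u t), u t⟫ ≤ Real.exp (-ω * t) ^ 2 * ⟪P (u 0), u 0⟫ := by
  have hV : ContinuousOn (fun s => ⟪P (u s), u s⟫) (Icc 0 t) :=
    (P.continuous.comp_continuousOn hu).inner hu
  have := le_gronwallBound_of_liminf_deriv_right_le (K := -(2 * ω)) (ε := 0) hV
    (fun s hs _ hr => ((hderiv s hs).real_inner_apply_self hP).liminf_right_slope_le hr)
    le_rfl (fun s hs => by linarith [hdiss s hs]) t ⟨ht, le_rfl⟩
  rw [gronwallBound_ε0, sub_zero, mul_comm] at this
  rwa [← Real.exp_nat_mul, Nat.cast_ofNat, ← mul_assoc, mul_neg]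

theorem norm_le_sqrt_div_mul_of_real_inner_apply_self_le {P : X →L[ℝ] X} {p c K : ℝ}
    (hp : 0 < p) (hcoer : ∀ x : X, p * ‖x‖ ^ 2 ≤ ⟪P x, x⟫)
    (hbound : ∀ x : X, ⟪P x, x⟫ ≤ c * ‖x‖ ^ 2) (hK : 0 ≤ K) {x y : X} (h : ⟪P y, y⟫ ≤ K ^ 2 * ⟪P x, x⟫) :
    ‖y‖ ≤ √(c / p) * K * ‖x‖ := by
  refine (pow_le_pow_iff_left₀ (norm_nonneg y) (by positivity) two_ne_zero).1 ?_
  have hc : c / p ≤ √(c / p) ^ 2 := by rw [Real.sq_sqrt']; exact le_max_left _ _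
  calc ‖y‖ ^ 2 ≤ ⟪P y, y⟫ / p := by rw [le_div_iff₀ hp]; linarith [hcoer y]
    _ ≤ K ^ 2 * (c * ‖x‖ ^ 2) / p := by gcongr; exact h.trans (by gcongr; exact hbound x)
    _ = K ^ 2 * ‖x‖ ^ 2 * (c / p) := by ring
    _ ≤ K ^ 2 * ‖x‖ ^ 2 * √(c / p) ^ 2 := by gcongr
    _ = (√(c / p) * K * ‖x‖) ^ 2 := by ring

end InnerProductSpace

/-- Both sides are the right derivative at `0` of `h ↦ T (t + h) x = T h (T t x)`. -/
theorem generator_apply_semigroup_eq {X : Type*} [NormedAddCommGroup X] [NormedSpace ℝ X]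
    {D : Submodule ℝ X} {A : D → X} {T : ℝ → X →L[ℝ] X}
    (hT0 : T 0 = ContinuousLinearMap.id ℝ X)
    (hTadd : ∀ s ≥ 0, ∀ t ≥ 0, T (s + t) = (T s).comp (T t))
    (hgen : ∀ (x : D) (t : ℝ), 0 ≤ t → HasDerivAt (fun s => T s (x : X)) (T t (A x)) t)
    (hinv : ∀ (x : D) (t : ℝ), 0 ≤ t → T t (x : X) ∈ D) (x : D) {t : ℝ} (ht : 0 ≤ t) :
    A ⟨T t x, hinv x t ht⟩ = T t (A x) := by
  set y : D := ⟨T t x, hinv x t ht⟩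
  have hy : HasDerivAt (fun h => T h (y : X)) (A y) 0 := by simpa [hT0] using hgen y 0 le_rfl
  have hx : HasDerivAt (fun h => T (t + h) (x : X)) (T t (A x)) 0 := by
    simpa [Function.comp_def] using
      (hgen x (t + 0) (by simpa using ht)).scomp 0 ((hasDerivAt_id (0 : ℝ)).const_add t)
  have hagree : EqOn (fun h => T (t + h) (x : X)) (fun h => T h (y : X)) (Ici 0) := fun h hh => by
    simp only [add_comm t h, hTadd h hh t ht]
    rfl
  exact (uniqueDiffOn_Ici 0 0 self_mem_Ici).eq_deriv _
    (hy.hasDerivWithinAt.congr hagree (hagree self_mem_Ici)) hx.hasDerivWithinAt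

theorem lyapunov_inequality_exponential_stability
    {X : Type*} [NormedAddCommGroup X] [InnerProductSpace ℝ X] [CompleteSpace X]
    -- densely defined operator A with domain D
    (D : Submodule ℝ X) (hD : Dense (D : Set X)) (A : D →ₗ[ℝ] X)
    -- P self-adjoint coercive
    (P : X →L[ℝ] X) (hPsa : ContinuousLinearMap.adjoint P = P)
    (p : ℝ) (hp : 0 < p) (hPcoer : ∀ x : X, ⟪P x, x⟫ ≥ p * ‖x‖ ^ 2)
    -- the dissipativity inequality
    (μ : ℝ) (hμ : 0 < μ)
    (hA : ∀ x : D, ⟪A x, P (x : X)⟫ ≤ -μ * ‖(x : X)‖ ^ 2)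
    -- A generates a C₀-semigroup
    (eA : ℝ → X →L[ℝ] X)
    (heA0 : eA 0 = ContinuousLinearMap.id ℝ X)
    (heAsg : ∀ s ≥ 0, ∀ t ≥ 0, eA (s + t) = (eA s).comp (eA t))
    (hTcont : ∀ x : X, Continuous fun t => eA t x)
    (hgen : ∀ (x : D) (t : ℝ), 0 ≤ t →
      HasDerivAt (fun s => eA s (x : X)) (eA t (A x)) t)
    (hinv : ∀ (x : D) (t : ℝ), 0 ≤ t → (eA t (x : X)) ∈ D) :
    ∃ M ≥ (1 : ℝ), ∃ ω > (0 : ℝ), ∀ t ≥ 0, ‖eA t‖ ≤ M * Real.exp (-ω * t) := by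
  set c := max ‖P‖ p
  have hc : 0 < c := hp.trans_le (le_max_right _ _)
  have hPsym : (P : X →ₗ[ℝ] X).IsSymmetric := IsSelfAdjoint.isSymmetric hPsa
  have hbound (v : X) : ⟪P v, v⟫ ≤ c * ‖v‖ ^ 2 :=
    (real_inner_apply_self_le_opNorm_mul_sq P v).trans (by gcongr; exact le_max_left _ _)
  have hdiss (y : D) : ⟪A y, P (y : X)⟫ ≤ -(μ / c) * ⟪P y, y⟫ := by
    have : μ / c * ⟪P y, y⟫ ≤ μ * ‖(y : X)‖ ^ 2 := by
      rw [div_mul_eq_mul_div, div_le_iff₀ hc]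
      linarith [mul_le_mul_of_nonneg_left (hbound y) hμ.le]
    linarith [hA y]
  have hdecay (x : D) (t : ℝ) (ht : 0 ≤ t) :
      ⟪P (eA t x), eA t x⟫ ≤ Real.exp (-(μ / c) * t) ^ 2 * ⟪P x, x⟫ := by
    simpa [heA0] using real_inner_apply_self_le_mul_exp hPsym ht (hTcont x).continuousOn
      (fun s hs => (hgen x s hs.1).hasDerivWithinAt) fun s hs => by
        simpa [generator_apply_semigroup_eq heA0 heAsg hgen hinv x hs.1] using
          hdiss ⟨eA s x, hinv x s hs.1⟩
  refine ⟨√(c / p), Real.one_le_sqrt.2 ((one_le_div hp).2 (le_max_right _ _)), μ / c,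
    div_pos hμ hc, fun t ht => (eA t).opNorm_le_of_dense hD (by positivity) fun x hx => ?_⟩
  exact norm_le_sqrt_div_mul_of_real_inner_apply_self_le hp hPcoer hbound
    (Real.exp_nonneg _) (hdecay ⟨x, hx⟩ t ht)
end
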